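/- (Theorem 1, value-function decrease) Under Assumptions 1 and 2 with ρ > 0 and γ := C/(1−ρ) > 1, let V̄ > 0, ρ_γ := (γ−1)/γ, γ̲ := min{γ, V̄/ε}, N₀ := ⌈max{0, (V̄ − γε)/ε}⌉, and for M ≥ 1 define N_M := N₀ + max{log(γ̲), log(C²ρ^M/(1−ρ^M)), 0}/(log(γ) − log(γ−1)). Then for every integer N > N_M and every x ∈ ℝⁿ with V_{N,M}(x) ≤ V̄, any minimizing input sequence u*(·) for V_{N,M}(x) satisfies V_{N,M}(f(x, u*(0))) ≤ V_{N,M}(x) − ε_{N,M} · ℓ(x, u*(0)), where ε_{N,M} := 1 − C² ρ_γ^{N−N₀} ρ^M/(1−ρ^M) ∈ (0,1]. -/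

import Mathlib

/-!
Along an optimal trajectory `(x_k, u_k)` the cost-to-go `S_k = V_{N,M}(x) - ∑_{j<k} ℓ(x_j, u_j)`
satisfies `S_k ≤ γ ℓ_min(x_k)` whenever `ℓ_min(x_k) ≤ ε`: switch to `κ` at time `k` and sum the
geometric bound of Assumption 2. Consequently every step with `S_k ≤ γ ε` costs at least `S_k / γ`,
so from then on `S` contracts by `ρ_γ = (γ - 1)/γ`; and `S` falls below `γ ε` within `N₀` steps,
since until then each step costs more than `ε`. Hence the terminal tail cost `S_N` is at most
`ρ_γ^(N-N₀)` times both `min(γ ε, V̄)` and `γ ℓ(x, u*(0))`. The choice of `N_M` makes it at most `ε`,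
so Assumption 2 holds along the tail and its last stage cost is at most
`C² ρ_γ^(N-N₀) ρ^M / (1 - ρ^M) · ℓ(x, u*(0))`. Shifting `u*` by one step and appending `κ` is
feasible from `f(x, u*(0))` and costs `V_{N,M}(x) - ℓ(x, u*(0))` plus that last stage cost.
-/

open Finset Filter
open scoped ENNReal

noncomputable section

open scoped Classical

/-- State/input spaces are Euclidean spaces. -/
abbrev Vec (n : ℕ) := EuclideanSpace ℝ (Fin n)

/-- Open-loop state trajectory: `x(0) = x`, `x(k+1) = f(x(k), u(k))`. -/
def traj {n m : ℕ} (f : Vec n → Vec m → Vec n) (x : Vec n) (u : ℕ → Vec m) : ℕ → Vec n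
  | 0 => x
  | k + 1 => f (traj f x u k) (u k)

/-- Closed-loop state trajectory under the feedback `κ` (the map `φ_x(·, x)`). -/
def phiX {n m : ℕ} (f : Vec n → Vec m → Vec n) (κ : Vec n → Vec m) (x : Vec n) : ℕ → Vec n
  | 0 => x
  | k + 1 => f (phiX f κ x k) (κ (phiX f κ x k))

/-- `ℓ_min(x) := inf_{u ∈ U} ℓ(x, u)`. -/
def lmin {n m : ℕ} (ℓ : Vec n → Vec m → ℝ) (Uset : Set (Vec m)) (x : Vec n) : ℝ :=
  sInf ((fun u => ℓ x u) '' Uset)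

/-- Finite-tail cost `V_{f,M}(x)`: sum of the stage cost along the κ-closed loop if the
constraints are satisfied along the tail, and `+∞` otherwise (for `M = 0` it equals `0`). -/
def Vtail {n m : ℕ} (f : Vec n → Vec m → Vec n) (κ : Vec n → Vec m)
    (ℓ : Vec n → Vec m → ℝ) (Z : Set (Vec n × Vec m)) (M : ℕ) (x : Vec n) : ℝ≥0∞ :=
  if ∀ k < M, (phiX f κ x k, κ (phiX f κ x k)) ∈ Z then
    ENNReal.ofReal (∑ k ∈ Finset.range M, ℓ (phiX f κ x k) (κ (phiX f κ x k)))
  else ⊤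

/-- Feasibility of the input sequence `u` over horizon `N` from state `x`. -/
def Feasible {n m : ℕ} (f : Vec n → Vec m → Vec n) (Z : Set (Vec n × Vec m))
    (Uset : Set (Vec m)) (N : ℕ) (x : Vec n) (u : ℕ → Vec m) : Prop :=
  ∀ k < N, u k ∈ Uset ∧ (traj f x u k, u k) ∈ Z

/-- MPC open-loop cost `J_{N,M}` of the input sequence `u` from state `x`. -/
def Jcost {n m : ℕ} (f : Vec n → Vec m → Vec n) (κ : Vec n → Vec m)
    (ℓ : Vec n → Vec m → ℝ) (Z : Set (Vec n × Vec m)) (N M : ℕ) (x : Vec n)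
    (u : ℕ → Vec m) : ℝ≥0∞ :=
  ENNReal.ofReal (∑ k ∈ Finset.range N, ℓ (traj f x u k) (u k)) +
    Vtail f κ ℓ Z M (traj f x u N)

/-- MPC value function `V_{N,M}(x)` (equal to `+∞` if the problem is infeasible). -/
def Vmpc {n m : ℕ} (f : Vec n → Vec m → Vec n) (κ : Vec n → Vec m)
    (ℓ : Vec n → Vec m → ℝ) (Z : Set (Vec n × Vec m)) (Uset : Set (Vec m))
    (N M : ℕ) (x : Vec n) : ℝ≥0∞ :=
  ⨅ (u : ℕ → Vec m) (_ : Feasible f Z Uset N x u), Jcost f κ ℓ Z N M x u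

/-- `u` is a minimizing (optimal) input sequence for `V_{N,M}(x)`. -/
def IsMinimizer {n m : ℕ} (f : Vec n → Vec m → Vec n) (κ : Vec n → Vec m)
    (ℓ : Vec n → Vec m → ℝ) (Z : Set (Vec n × Vec m)) (Uset : Set (Vec m))
    (N M : ℕ) (x : Vec n) (u : ℕ → Vec m) : Prop :=
  Feasible f Z Uset N x u ∧ Vmpc f κ ℓ Z Uset N M x = Jcost f κ ℓ Z N M x u

/-- Infinite-horizon optimal cost `V_{∞,0}(x)`. -/
def Vinf {n m : ℕ} (f : Vec n → Vec m → Vec n) (ℓ : Vec n → Vec m → ℝ)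
    (Z : Set (Vec n × Vec m)) (Uset : Set (Vec m)) (x : Vec n) : ℝ≥0∞ :=
  ⨅ (u : ℕ → Vec m) (_ : ∀ k, u k ∈ Uset ∧ (traj f x u k, u k) ∈ Z),
    ∑' k : ℕ, ENNReal.ofReal (ℓ (traj f x u k) (u k))

/-- Assumption 2 (locally stabilizing controller): exponential decay of the stage
cost along the κ-closed loop and constraint satisfaction, locally (`ℓ_min(x) ≤ ε`). -/
def Assumption2 {n m : ℕ} (f : Vec n → Vec m → Vec n) (κ : Vec n → Vec m)
    (ℓ : Vec n → Vec m → ℝ) (Z : Set (Vec n × Vec m)) (Uset : Set (Vec m))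
    (ρ C ε : ℝ) : Prop :=
  ρ ∈ Set.Ico (0 : ℝ) 1 ∧ 1 ≤ C ∧ 0 < ε ∧
    ∀ x : Vec n, lmin ℓ Uset x ≤ ε → ∀ k : ℕ,
      ℓ (phiX f κ x k) (κ (phiX f κ x k)) ≤ C * ρ ^ k * lmin ℓ Uset x ∧
      (phiX f κ x k, κ (phiX f κ x k)) ∈ Z

/-- A class-`K∞` function: continuous, strictly increasing and unbounded on `[0,∞)`
with `α(0) = 0`. -/
def IsKInfty (α : ℝ → ℝ) : Prop :=
  ContinuousOn α (Set.Ici 0) ∧ StrictMonoOn α (Set.Ici 0) ∧ α 0 = 0 ∧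
    Tendsto α atTop atTop

lemma mul_pow_lt_one_of_log_lt {r b : ℝ} {t : ℕ} (hr : 0 < r) (hb : 0 ≤ b)
    (h : Real.log b < t * -Real.log r) : b * r ^ t < 1 := by
  rcases hb.eq_or_lt with rfl | hb
  · simp
  · rw [← Real.log_neg_iff (by positivity), Real.log_mul hb.ne' (by positivity), Real.log_pow]
    linarith

lemma horizon_bounds {γ b c : ℝ} {N₀ N : ℕ} (hγ : 1 < γ) (hb : 0 ≤ b) (hc : 0 ≤ c)
    (hN : N₀ + max (Real.log b) (max (Real.log c) 0) / (Real.log γ - Real.log (γ - 1)) < N) :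
    N₀ < N ∧ b * ((γ - 1) / γ) ^ (N - N₀) < 1 ∧ c * ((γ - 1) / γ) ^ (N - N₀) < 1 := by
  have hΔ : 0 < Real.log γ - Real.log (γ - 1) :=
    sub_pos.2 (Real.log_lt_log (by linarith) (by linarith))
  have hmax0 : 0 ≤ max (Real.log b) (max (Real.log c) 0) := le_max_of_le_right (le_max_right _ _)
  have hN₀N : N₀ < N := by
    have : (N₀ : ℝ) < N := (le_add_of_nonneg_right (div_nonneg hmax0 hΔ.le)).trans_lt hN
    exact_mod_cast this
  have hmax : max (Real.log b) (max (Real.log c) 0) <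
      (N - N₀ : ℕ) * -Real.log ((γ - 1) / γ) := by
    rw [Real.log_div (by linarith) (by linarith), neg_sub, Nat.cast_sub hN₀N.le,
      ← div_lt_iff₀ hΔ]
    linarith
  have hr : 0 < (γ - 1) / γ := div_pos (by linarith) (by linarith)
  exact ⟨hN₀N, mul_pow_lt_one_of_log_lt hr hb ((le_max_left _ _).trans_lt hmax),
    mul_pow_lt_one_of_log_lt hr hc ((le_max_of_le_right (le_max_left _ _)).trans_lt hmax)⟩

lemma sub_le_div_mul_self {s l a γ ε : ℝ} (hγ : 0 < γ) (hal : a ≤ l)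
    (hkey : a ≤ ε → s ≤ γ * a) (hs : s ≤ γ * ε) : s - l ≤ (γ - 1) / γ * s := by
  have hsl : s / γ ≤ l := by
    rw [div_le_iff₀ hγ]
    rcases le_or_gt a ε with h | h
    · nlinarith [hkey h]
    · nlinarith
  calc s - l ≤ s - s / γ := by linarith
    _ = (γ - 1) / γ * s := by field_simp

section CostToGo

/- Applied with `V = V_{N,M}(x)`, `L k = ℓ(x_k, u_k)` along an optimal trajectory and
`a k = ℓ_min(x_k)`; `hkey` bounds `V` by the cost of switching to `κ` at time `k`. -/
variable {L a : ℕ → ℝ} {V γ ε : ℝ} {N : ℕ}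

lemma sub_sum_range_antitone (haL : ∀ k < N, a k ≤ L k) (ha0 : ∀ k, 0 ≤ a k)
    {i j : ℕ} (hij : i ≤ j) (hj : j ≤ N) :
    V - ∑ l ∈ range j, L l ≤ V - ∑ l ∈ range i, L l :=
  sub_le_sub_left (sum_le_sum_of_subset_of_nonneg (range_subset_range.2 hij) fun l hl _ =>
    (ha0 l).trans (haL l ((mem_range.1 hl).trans_le hj))) V

lemma sub_sum_range_le_pow_mul (hγ : 1 < γ) (haL : ∀ k < N, a k ≤ L k) (ha0 : ∀ k, 0 ≤ a k)
    (hkey : ∀ k < N, a k ≤ ε → V ≤ ∑ j ∈ range k, L j + γ * a k)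
    {k₀ : ℕ} (hk₀ : V - ∑ j ∈ range k₀, L j ≤ γ * ε) :
    ∀ i, k₀ + i ≤ N →
      V - ∑ j ∈ range (k₀ + i), L j ≤ ((γ - 1) / γ) ^ i * (V - ∑ j ∈ range k₀, L j)
  | 0, _ => by simp
  | i + 1, hi => by
    have hk : k₀ + i < N := by omega
    have hstep := sub_le_div_mul_self (by linarith) (haL _ hk)
      (fun h => by linarith [hkey _ hk h])
      ((sub_sum_range_antitone haL ha0 (Nat.le_add_right k₀ i) hk.le).trans hk₀)
    have hργ : 0 ≤ (γ - 1) / γ := div_nonneg (by linarith) (by linarith)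
    calc V - ∑ j ∈ range (k₀ + (i + 1)), L j
        = V - ∑ j ∈ range (k₀ + i), L j - L (k₀ + i) := by
          rw [← add_assoc, sum_range_succ]; ring
      _ ≤ (γ - 1) / γ * (V - ∑ j ∈ range (k₀ + i), L j) := hstep
      _ ≤ (γ - 1) / γ * (((γ - 1) / γ) ^ i * (V - ∑ j ∈ range k₀, L j)) :=
          mul_le_mul_of_nonneg_left (sub_sum_range_le_pow_mul hγ haL ha0 hkey hk₀ i hk.le) hργ
      _ = ((γ - 1) / γ) ^ (i + 1) * (V - ∑ j ∈ range k₀, L j) := by ring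

lemma exists_sub_sum_range_le (hγ : 0 ≤ γ) (haL : ∀ k < N, a k ≤ L k)
    (hkey : ∀ k < N, a k ≤ ε → V ≤ ∑ j ∈ range k, L j + γ * a k)
    {N₀ : ℕ} (hN₀ : N₀ < N) (hV : V ≤ γ * ε + N₀ * ε) :
    ∃ k₀ ≤ N₀, V - ∑ j ∈ range k₀, L j ≤ γ * ε := by
  by_cases h : ∃ k ≤ N₀, a k ≤ ε
  · obtain ⟨k, hk, hak⟩ := h
    exact ⟨k, hk, by nlinarith [hkey k (by omega) hak]⟩
  · push Not at h
    have hsum : N₀ * ε ≤ ∑ j ∈ range N₀, L j := by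
      simpa using card_nsmul_le_sum (range N₀) L ε fun j hj =>
        (h j (mem_range.1 hj).le).le.trans (haL j ((mem_range.1 hj).trans hN₀))
    exact ⟨N₀, le_rfl, by linarith⟩

theorem sub_sum_range_le_pow (hγ : 1 < γ) (haL : ∀ k < N, a k ≤ L k) (ha0 : ∀ k, 0 ≤ a k)
    (hkey : ∀ k < N, a k ≤ ε → V ≤ ∑ j ∈ range k, L j + γ * a k)
    {N₀ : ℕ} (hN₀ : N₀ < N) (hV : V ≤ γ * ε + N₀ * ε) (hT : 0 ≤ V - ∑ j ∈ range N, L j) :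
    V - ∑ j ∈ range N, L j ≤ ((γ - 1) / γ) ^ (N - N₀) * min (γ * ε) V ∧
      V - ∑ j ∈ range N, L j ≤ ((γ - 1) / γ) ^ (N - N₀) * (γ * L 0) := by
  obtain ⟨k₀, hk₀N₀, hk₀⟩ := exists_sub_sum_range_le (by linarith) haL hkey hN₀ hV
  set S₀ := V - ∑ j ∈ range k₀, L j
  have hS₀V : S₀ ≤ V := by
    have h := sub_sum_range_antitone (V := V) haL ha0 (Nat.zero_le k₀) (by omega)
    rwa [range_zero, sum_empty, sub_zero] at h
  have hTS₀ : V - ∑ j ∈ range N, L j ≤ ((γ - 1) / γ) ^ (N - N₀) * S₀ := by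
    have hdecay := sub_sum_range_le_pow_mul hγ haL ha0 hkey hk₀ (N - k₀) (by omega)
    rw [Nat.add_sub_cancel' (by omega)] at hdecay
    refine hdecay.trans (mul_le_mul_of_nonneg_right ?_ (hT.trans ?_))
    · exact pow_le_pow_of_le_one (div_nonneg (by linarith) (by linarith))
        ((div_le_one (by linarith)).2 (by linarith)) (by omega)
    · exact sub_sum_range_antitone haL ha0 (by omega) le_rfl
  have hS₀L : S₀ ≤ γ * L 0 := by
    have haL0 := haL 0 (by omega)
    rcases le_or_gt (a 0) ε with h | h
    · have := hkey 0 (by omega) h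
      simp only [range_zero, sum_empty, zero_add] at this
      nlinarith
    · nlinarith
  have hθ : 0 ≤ ((γ - 1) / γ) ^ (N - N₀) := pow_nonneg (div_nonneg (by linarith) (by linarith)) _
  exact ⟨hTS₀.trans (mul_le_mul_of_nonneg_left (le_min hk₀ hS₀V) hθ),
    hTS₀.trans (mul_le_mul_of_nonneg_left hS₀L hθ)⟩

end CostToGo

section MPC

variable {n m : ℕ} {f : Vec n → Vec m → Vec n} {κ : Vec n → Vec m} {ℓ : Vec n → Vec m → ℝ}
  {Z : Set (Vec n × Vec m)} {Uset : Set (Vec m)} {ρ C ε : ℝ}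

lemma phiX_add (x : Vec n) (j k : ℕ) : phiX f κ (phiX f κ x j) k = phiX f κ x (j + k) := by
  induction k with
  | zero => rfl
  | succ k ih => simp only [phiX, ih]; rfl

lemma traj_feedback (x : Vec n) (k : ℕ) :
    traj f x (fun j => κ (phiX f κ x j)) k = phiX f κ x k := by
  induction k with
  | zero => rfl
  | succ k ih => simp only [traj, phiX, ih]

lemma traj_shift (x : Vec n) (u : ℕ → Vec m) (k : ℕ) :
    traj f (f x (u 0)) (fun j => u (j + 1)) k = traj f x u (k + 1) := by
  induction k with
  | zero => rfl
  | succ k ih => simp only [traj, ih]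

lemma traj_congr {x : Vec n} {u v : ℕ → Vec m} {k : ℕ} (h : ∀ j < k, u j = v j) :
    traj f x u k = traj f x v k := by
  induction k with
  | zero => rfl
  | succ k ih => simp only [traj, ih fun j hj => h j (by omega), h k (by omega)]

def concatInput (k : ℕ) (u v : ℕ → Vec m) : ℕ → Vec m :=
  fun i => if i < k then u i else v (i - k)

lemma concatInput_add (k j : ℕ) (u v : ℕ → Vec m) : concatInput k u v (k + j) = v j := by
  simp [concatInput]

lemma traj_concatInput_of_le {x : Vec n} {u v : ℕ → Vec m} {k j : ℕ} (hj : j ≤ k) :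
    traj f x (concatInput k u v) j = traj f x u j :=
  traj_congr fun i hi => if_pos (by omega)

lemma traj_concatInput_add (x : Vec n) (u v : ℕ → Vec m) (k j : ℕ) :
    traj f x (concatInput k u v) (k + j) = traj f (traj f x u k) v j := by
  induction j with
  | zero => exact traj_concatInput_of_le le_rfl
  | succ j ih => rw [← add_assoc, traj, ih, concatInput_add, traj]

lemma Feasible.mono {N k : ℕ} {x : Vec n} {u : ℕ → Vec m} (hu : Feasible f Z Uset N x u)
    (hk : k ≤ N) : Feasible f Z Uset k x u :=
  fun i hi => hu i (by omega)

lemma Feasible.shift {N : ℕ} {x : Vec n} {u : ℕ → Vec m} (hu : Feasible f Z Uset (N + 1) x u) :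
    Feasible f Z Uset N (f x (u 0)) (fun j => u (j + 1)) := by
  intro k hk
  rw [traj_shift]
  exact hu (k + 1) (by omega)

lemma Feasible.concat {k j : ℕ} {x : Vec n} {u v : ℕ → Vec m}
    (hu : Feasible f Z Uset k x u) (hv : Feasible f Z Uset j (traj f x u k) v) :
    Feasible f Z Uset (k + j) x (concatInput k u v) := by
  intro i hi
  rcases lt_or_ge i k with hik | hik
  · rw [traj_concatInput_of_le hik.le, concatInput, if_pos hik]
    exact hu i hik
  · obtain ⟨i, rfl⟩ := Nat.exists_eq_add_of_le hik
    rw [traj_concatInput_add, concatInput_add]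
    exact hv i (by omega)

lemma Jcost_concatInput (hℓ0 : ∀ x u, 0 ≤ ℓ x u) (k j M : ℕ) (x : Vec n) (u v : ℕ → Vec m) :
    Jcost f κ ℓ Z (k + j) M x (concatInput k u v) =
      ENNReal.ofReal (∑ i ∈ range k, ℓ (traj f x u i) (u i)) +
        Jcost f κ ℓ Z j M (traj f x u k) v := by
  have hprefix : ∀ i ∈ range k, ℓ (traj f x (concatInput k u v) i) (concatInput k u v i) =
      ℓ (traj f x u i) (u i) := fun i hi => by
    rw [mem_range] at hi
    rw [traj_concatInput_of_le hi.le, concatInput, if_pos hi]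
  rw [Jcost, Jcost, sum_range_add, sum_congr rfl hprefix, traj_concatInput_add,
    ENNReal.ofReal_add (sum_nonneg fun _ _ => hℓ0 _ _) (sum_nonneg fun _ _ => hℓ0 _ _), add_assoc]
  simp only [traj_concatInput_add, concatInput_add]

theorem Vmpc_add_le (hℓ0 : ∀ x u, 0 ≤ ℓ x u) {k : ℕ} (j M : ℕ) {x : Vec n} {u : ℕ → Vec m}
    (hu : Feasible f Z Uset k x u) :
    Vmpc f κ ℓ Z Uset (k + j) M x ≤
      ENNReal.ofReal (∑ i ∈ range k, ℓ (traj f x u i) (u i)) +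
        Vmpc f κ ℓ Z Uset j M (traj f x u k) := by
  simp only [Vmpc]
  rw [ENNReal.add_iInf]
  refine le_iInf fun v => ?_
  rw [ENNReal.add_iInf]
  refine le_iInf fun hv => ?_
  rw [← Jcost_concatInput hℓ0]
  exact iInf₂_le _ (hu.concat hv)

lemma Jcost_eq_ofReal (hℓ0 : ∀ x u, 0 ≤ ℓ x u) {N M : ℕ} {x : Vec n} {u : ℕ → Vec m}
    (hZ : ∀ k < M, (phiX f κ (traj f x u N) k, κ (phiX f κ (traj f x u N) k)) ∈ Z) :
    Jcost f κ ℓ Z N M x u = ENNReal.ofReal (∑ k ∈ range N, ℓ (traj f x u k) (u k) +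
      ∑ k ∈ range M, ℓ (phiX f κ (traj f x u N) k) (κ (phiX f κ (traj f x u N) k))) := by
  rw [Jcost, Vtail, if_pos hZ,
    ENNReal.ofReal_add (sum_nonneg fun _ _ => hℓ0 _ _) (sum_nonneg fun _ _ => hℓ0 _ _)]

lemma Vmpc_le_sum_closedLoop (hℓ0 : ∀ x u, 0 ≤ ℓ x u) (hκU : ∀ x, κ x ∈ Uset) {z : Vec n}
    {j M : ℕ} (hZ : ∀ k < j + M, (phiX f κ z k, κ (phiX f κ z k)) ∈ Z) :
    Vmpc f κ ℓ Z Uset j M z ≤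
      ENNReal.ofReal (∑ k ∈ range (j + M), ℓ (phiX f κ z k) (κ (phiX f κ z k))) := by
  have hfeas : Feasible f Z Uset j z fun k => κ (phiX f κ z k) := fun k hk =>
    ⟨hκU _, by rw [traj_feedback]; exact hZ k (by omega)⟩
  refine (iInf₂_le _ hfeas).trans_eq ?_
  rw [Jcost_eq_ofReal hℓ0, sum_range_add]
  · simp only [traj_feedback, phiX_add]
  · intro k hk
    rw [traj_feedback, phiX_add]
    exact hZ _ (by omega)

lemma lmin_nonneg (hℓ0 : ∀ x u, 0 ≤ ℓ x u) (x : Vec n) : 0 ≤ lmin ℓ Uset x :=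
  Real.sInf_nonneg (by rintro _ ⟨u, _, rfl⟩; exact hℓ0 x u)

lemma lmin_le (hℓ0 : ∀ x u, 0 ≤ ℓ x u) {u : Vec m} (hu : u ∈ Uset) (x : Vec n) :
    lmin ℓ Uset x ≤ ℓ x u :=
  csInf_le ⟨0, by rintro _ ⟨w, _, rfl⟩; exact hℓ0 x w⟩ ⟨u, hu, rfl⟩

theorem Vmpc_le_mul_lmin (hA2 : Assumption2 f κ ℓ Z Uset ρ C ε) (hκU : ∀ x, κ x ∈ Uset)
    (hℓ0 : ∀ x u, 0 ≤ ℓ x u) {z : Vec n} (hz : lmin ℓ Uset z ≤ ε) (j M : ℕ) :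
    Vmpc f κ ℓ Z Uset j M z ≤ ENNReal.ofReal (C / (1 - ρ) * lmin ℓ Uset z) := by
  obtain ⟨⟨hρ0, hρ1⟩, hC, -, hdecay⟩ := hA2
  refine (Vmpc_le_sum_closedLoop hℓ0 hκU fun k _ => (hdecay z hz k).2).trans
    (ENNReal.ofReal_le_ofReal ?_)
  have hgeom := geom_sum_Ico_le_of_lt_one (m := 0) (n := j + M) hρ0 hρ1
  rw [← range_eq_Ico, pow_zero] at hgeom
  calc ∑ k ∈ range (j + M), ℓ (phiX f κ z k) (κ (phiX f κ z k))
      ≤ ∑ k ∈ range (j + M), C * ρ ^ k * lmin ℓ Uset z := sum_le_sum fun k _ => (hdecay z hz k).1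
    _ = C * lmin ℓ Uset z * ∑ k ∈ range (j + M), ρ ^ k := by rw [mul_sum]; ring_nf
    _ ≤ C * lmin ℓ Uset z * (1 / (1 - ρ)) :=
        mul_le_mul_of_nonneg_left hgeom (mul_nonneg (by linarith) (lmin_nonneg hℓ0 z))
    _ = C / (1 - ρ) * lmin ℓ Uset z := by ring

lemma IsMinimizer.Vmpc_eq_ofReal (hℓ0 : ∀ x u, 0 ≤ ℓ x u) {N M : ℕ} {x : Vec n}
    {u : ℕ → Vec m} (hu : IsMinimizer f κ ℓ Z Uset N M x u) (hV : Vmpc f κ ℓ Z Uset N M x ≠ ⊤) :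
    Vmpc f κ ℓ Z Uset N M x = ENNReal.ofReal (∑ k ∈ range N, ℓ (traj f x u k) (u k) +
        ∑ k ∈ range M, ℓ (phiX f κ (traj f x u N) k) (κ (phiX f κ (traj f x u N) k))) := by
  have hZ : ∀ k < M, (phiX f κ (traj f x u N) k, κ (phiX f κ (traj f x u N) k)) ∈ Z := by
    by_contra h
    exact hV (by rw [hu.2, Jcost, Vtail, if_neg h, add_top])
  exact hu.2.trans (Jcost_eq_ofReal hℓ0 hZ)

lemma IsMinimizer.le_sum_add_mul_lmin (hA2 : Assumption2 f κ ℓ Z Uset ρ C ε)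
    (hκU : ∀ x, κ x ∈ Uset) (hℓ0 : ∀ x u, 0 ≤ ℓ x u) {N M k : ℕ} {x : Vec n}
    {u : ℕ → Vec m} {V : ℝ} (hu : IsMinimizer f κ ℓ Z Uset N M x u)
    (hV : Vmpc f κ ℓ Z Uset N M x = ENNReal.ofReal V) (hk : k ≤ N)
    (hlmin : lmin ℓ Uset (traj f x u k) ≤ ε) :
    V ≤ ∑ j ∈ range k, ℓ (traj f x u j) (u j) + C / (1 - ρ) * lmin ℓ Uset (traj f x u k) := by
  obtain ⟨⟨-, hρ1⟩, hC, -⟩ := id hA2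
  have hbound : 0 ≤ C / (1 - ρ) * lmin ℓ Uset (traj f x u k) :=
    mul_nonneg (div_nonneg (by linarith) (by linarith)) (lmin_nonneg hℓ0 _)
  have hDP := Vmpc_add_le (κ := κ) hℓ0 (N - k) M (hu.1.mono hk)
  rw [Nat.add_sub_cancel' hk, hV] at hDP
  have hlocal := Vmpc_le_mul_lmin hA2 hκU hℓ0 hlmin (N - k) M
  rw [← ENNReal.ofReal_le_ofReal_iff (add_nonneg (sum_nonneg fun _ _ => hℓ0 _ _) hbound),
    ENNReal.ofReal_add (sum_nonneg fun _ _ => hℓ0 _ _) hbound]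
  exact hDP.trans (add_le_add_right hlocal _)

lemma stageCost_phiX_mul_le (hA2 : Assumption2 f κ ℓ Z Uset ρ C ε) (hκU : ∀ x, κ x ∈ Uset)
    (hℓ0 : ∀ x u, 0 ≤ ℓ x u) {y : Vec n} {M : ℕ}
    (hT : ∑ k ∈ range M, ℓ (phiX f κ y k) (κ (phiX f κ y k)) ≤ ε) :
    ℓ (phiX f κ y M) (κ (phiX f κ y M)) * (1 - ρ ^ M) ≤
      C * (1 - ρ) * ρ ^ M * ∑ k ∈ range M, ℓ (phiX f κ y k) (κ (phiX f κ y k)) := by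
  obtain ⟨⟨hρ0, hρ1⟩, hC, -, hdecay⟩ := hA2
  set G := fun k => ℓ (phiX f κ y k) (κ (phiX f κ y k))
  have hpointwise : ∀ k ∈ range M, ρ ^ k * G M ≤ C * ρ ^ M * G k := by
    intro k hk
    have hkM : k + (M - k) = M := Nat.add_sub_cancel' (mem_range.1 hk).le
    have hlmin : lmin ℓ Uset (phiX f κ y k) ≤ G k := lmin_le hℓ0 (hκU _) _
    have hGk : G k ≤ ε := (single_le_sum (f := G) (fun j _ => hℓ0 _ _) hk).trans hT
    have h := (hdecay _ (hlmin.trans hGk) (M - k)).1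
    rw [phiX_add, hkM] at h
    calc ρ ^ k * G M ≤ ρ ^ k * (C * ρ ^ (M - k) * lmin ℓ Uset (phiX f κ y k)) :=
          mul_le_mul_of_nonneg_left h (pow_nonneg hρ0 _)
      _ = C * (ρ ^ k * ρ ^ (M - k)) * lmin ℓ Uset (phiX f κ y k) := by ring
      _ = C * ρ ^ M * lmin ℓ Uset (phiX f κ y k) := by rw [← pow_add, hkM]
      _ ≤ C * ρ ^ M * G k := mul_le_mul_of_nonneg_left hlmin (by positivity)
  have hsum := sum_le_sum hpointwise
  rw [← sum_mul, ← mul_sum] at hsum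
  have hgeom : (∑ k ∈ range M, ρ ^ k) * (1 - ρ) = 1 - ρ ^ M := by
    linear_combination -geom_sum_mul ρ M
  calc G M * (1 - ρ ^ M) = (∑ k ∈ range M, ρ ^ k) * G M * (1 - ρ) := by rw [← hgeom]; ring
    _ ≤ C * ρ ^ M * (∑ k ∈ range M, G k) * (1 - ρ) :=
        mul_le_mul_of_nonneg_right hsum (by linarith)
    _ = C * (1 - ρ) * ρ ^ M * ∑ k ∈ range M, G k := by ring

lemma Vmpc_next_le (hℓ0 : ∀ x u, 0 ≤ ℓ x u) (hκU : ∀ x, κ x ∈ Uset) {N M : ℕ} {x : Vec n}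
    {u : ℕ → Vec m} (hu : Feasible f Z Uset (N + 1) x u)
    (hZ : ∀ k < 1 + M,
      (phiX f κ (traj f x u (N + 1)) k, κ (phiX f κ (traj f x u (N + 1)) k)) ∈ Z) :
    Vmpc f κ ℓ Z Uset (N + 1) M (f x (u 0)) ≤
      ENNReal.ofReal (∑ k ∈ range N, ℓ (traj f x u (k + 1)) (u (k + 1)) +
        ∑ k ∈ range (1 + M),
          ℓ (phiX f κ (traj f x u (N + 1)) k) (κ (phiX f κ (traj f x u (N + 1)) k))) := by
  have hDP := Vmpc_add_le (κ := κ) hℓ0 1 M hu.shift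
  simp only [traj_shift] at hDP
  rw [ENNReal.ofReal_add (sum_nonneg fun _ _ => hℓ0 _ _) (sum_nonneg fun _ _ => hℓ0 _ _)]
  exact hDP.trans (add_le_add_right (Vmpc_le_sum_closedLoop hℓ0 hκU hZ) _)

lemma IsMinimizer.tail_le (hA2 : Assumption2 f κ ℓ Z Uset ρ C ε) (hκU : ∀ x, κ x ∈ Uset)
    (hℓ0 : ∀ x u, 0 ≤ ℓ x u) {γ Vbar : ℝ} {N₀ N M : ℕ} {x : Vec n} {u : ℕ → Vec m}
    (hγ : γ = C / (1 - ρ)) (hγ1 : 1 < γ) (hVbar : 0 ≤ Vbar) (hN₀N : N₀ < N)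
    (hN₀ : Vbar ≤ γ * ε + N₀ * ε) (hθε : ((γ - 1) / γ) ^ (N - N₀) * min (γ * ε) Vbar ≤ ε)
    (hu : IsMinimizer f κ ℓ Z Uset N M x u)
    (hVx : Vmpc f κ ℓ Z Uset N M x ≤ ENNReal.ofReal Vbar) :
    ∑ k ∈ range M, ℓ (phiX f κ (traj f x u N) k) (κ (phiX f κ (traj f x u N) k)) ≤ ε ∧
      ∑ k ∈ range M, ℓ (phiX f κ (traj f x u N) k) (κ (phiX f κ (traj f x u N) k)) ≤
        ((γ - 1) / γ) ^ (N - N₀) * (γ * ℓ x (u 0)) := by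
  have hVx_eq := hu.Vmpc_eq_ofReal hℓ0 (ne_top_of_le_ne_top ENNReal.ofReal_ne_top hVx)
  have hVr := (ENNReal.ofReal_le_ofReal_iff hVbar).1 (hVx_eq ▸ hVx)
  obtain ⟨hTmin, hTL0⟩ := sub_sum_range_le_pow (a := fun k => lmin ℓ Uset (traj f x u k)) hγ1
    (fun k hk => lmin_le hℓ0 (hu.1 k hk).1 _) (fun k => lmin_nonneg hℓ0 _)
    (fun k hk hak => hγ ▸ hu.le_sum_add_mul_lmin hA2 hκU hℓ0 hVx_eq hk.le hak) hN₀N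
    (hVr.trans hN₀) (by rw [add_sub_cancel_left]; exact sum_nonneg fun k _ => hℓ0 _ _)
  rw [add_sub_cancel_left] at hTmin hTL0
  have hθ : 0 ≤ ((γ - 1) / γ) ^ (N - N₀) := pow_nonneg (div_nonneg (by linarith) (by linarith)) _
  exact ⟨hTmin.trans ((mul_le_mul_of_nonneg_left (min_le_min_left _ hVr) hθ).trans hθε), hTL0⟩

theorem IsMinimizer.Vmpc_next_add_le (hA2 : Assumption2 f κ ℓ Z Uset ρ C ε)
    (hκU : ∀ x, κ x ∈ Uset) (hℓ0 : ∀ x u, 0 ≤ ℓ x u) {γ Vbar : ℝ} {N₀ N M : ℕ} {x : Vec n}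
    {u : ℕ → Vec m} (hγ : γ = C / (1 - ρ)) (hγ1 : 1 < γ) (hVbar : 0 ≤ Vbar) (hM : 1 ≤ M)
    (hN₀N : N₀ < N) (hN₀ : Vbar ≤ γ * ε + N₀ * ε)
    (hθε : ((γ - 1) / γ) ^ (N - N₀) * min (γ * ε) Vbar ≤ ε)
    (hθB : C ^ 2 * ((γ - 1) / γ) ^ (N - N₀) * ρ ^ M / (1 - ρ ^ M) ≤ 1)
    (hu : IsMinimizer f κ ℓ Z Uset N M x u)
    (hVx : Vmpc f κ ℓ Z Uset N M x ≤ ENNReal.ofReal Vbar) :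
    Vmpc f κ ℓ Z Uset N M (f x (u 0)) +
        ENNReal.ofReal ((1 - C ^ 2 * ((γ - 1) / γ) ^ (N - N₀) * ρ ^ M / (1 - ρ ^ M)) *
          ℓ x (u 0)) ≤
      Vmpc f κ ℓ Z Uset N M x := by
  obtain ⟨⟨hρ0, hρ1⟩, hC, -, hdecay⟩ := id hA2
  obtain ⟨hT, hTL0⟩ := hu.tail_le hA2 hκU hℓ0 hγ hγ1 hVbar hN₀N hN₀ hθε hVx
  have hVx_eq := hu.Vmpc_eq_ofReal hℓ0 (ne_top_of_le_ne_top ENNReal.ofReal_ne_top hVx)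
  set θ := ((γ - 1) / γ) ^ (N - N₀)
  obtain ⟨N, rfl⟩ : ∃ N', N = N' + 1 := ⟨N - 1, by omega⟩
  set y := traj f x u (N + 1)
  set L := fun k => ℓ (traj f x u k) (u k)
  set G := fun k => ℓ (phiX f κ y k) (κ (phiX f κ y k))
  have hlmin_y : lmin ℓ Uset y ≤ ε := (lmin_le hℓ0 (hκU y) y).trans
    ((single_le_sum (f := G) (fun _ _ => hℓ0 _ _) (mem_range.2 hM)).trans hT)
  have hρM : 0 < 1 - ρ ^ M := sub_pos.2 (pow_lt_one₀ hρ0 hρ1 (by omega))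
  have hGM : G M ≤ C ^ 2 * θ * ρ ^ M / (1 - ρ ^ M) * L 0 := by
    rw [div_mul_eq_mul_div, le_div_iff₀ hρM]
    refine (stageCost_phiX_mul_le hA2 hκU hℓ0 hT).trans ?_
    have hγC : γ * (1 - ρ) = C := by rw [hγ]; field_simp [(by linarith : (1 - ρ) ≠ 0)]
    calc C * (1 - ρ) * ρ ^ M * ∑ k ∈ range M, G k ≤ C * (1 - ρ) * ρ ^ M * (θ * (γ * L 0)) :=
          mul_le_mul_of_nonneg_left hTL0
            (mul_nonneg (mul_nonneg (by linarith) (by linarith)) (pow_nonneg hρ0 M))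
      _ = C ^ 2 * θ * ρ ^ M * L 0 := by rw [← hγC]; ring
  have hnext := Vmpc_next_le (M := M) hℓ0 hκU hu.1 fun k _ => (hdecay y hlmin_y k).2
  have hdecrease : 0 ≤ (1 - C ^ 2 * θ * ρ ^ M / (1 - ρ ^ M)) * ℓ x (u 0) :=
    mul_nonneg (by linarith) (hℓ0 _ _)
  rw [hVx_eq]
  refine (add_le_add_left hnext _).trans ?_
  rw [← ENNReal.ofReal_add (add_nonneg (sum_nonneg fun _ _ => hℓ0 _ _)
    (sum_nonneg fun _ _ => hℓ0 _ _)) hdecrease]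
  refine ENNReal.ofReal_le_ofReal ?_
  change ∑ k ∈ range N, L (k + 1) + ∑ k ∈ range (1 + M), G k +
      (1 - C ^ 2 * θ * ρ ^ M / (1 - ρ ^ M)) * L 0 ≤ ∑ k ∈ range (N + 1), L k + ∑ k ∈ range M, G k
  rw [sum_range_succ' L, add_comm 1 M, sum_range_succ G]
  linarith

end MPC

theorem value_function_decrease_general {n m : ℕ}
    (f : Vec n → Vec m → Vec n) (κ : Vec n → Vec m) (ℓ : Vec n → Vec m → ℝ)
    (Z : Set (Vec n × Vec m)) (Uset : Set (Vec m)) (ρ C ε : ℝ)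
    (hℓ0 : ∀ x u, 0 ≤ ℓ x u)
    (hκU : ∀ x, κ x ∈ Uset)
    (hA2 : Assumption2 f κ ℓ Z Uset ρ C ε)
    (Vbar γ ργ γlow NM : ℝ) (hVbar : 0 < Vbar) (hγ : γ = C / (1 - ρ)) (hγ1 : 1 < γ)
    (hργ : ργ = (γ - 1) / γ) (hγlow : γlow = min γ (Vbar / ε))
    (N₀ : ℕ) (hN₀ : N₀ = ⌈max 0 ((Vbar - γ * ε) / ε)⌉₊)
    (M : ℕ) (hM : 1 ≤ M)
    (hNM : NM = N₀ + max (Real.log γlow)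
        (max (Real.log (C ^ 2 * ρ ^ M / (1 - ρ ^ M))) 0) /
        (Real.log γ - Real.log (γ - 1)))
    (N : ℕ) (hN : NM < N) (εNM : ℝ)
    (hεNM : εNM = 1 - C ^ 2 * ργ ^ (N - N₀) * ρ ^ M / (1 - ρ ^ M)) :
    εNM ∈ Set.Ioc (0 : ℝ) 1 ∧
    ∀ x : Vec n, Vmpc f κ ℓ Z Uset N M x ≤ ENNReal.ofReal Vbar →
      ∀ u : ℕ → Vec m, IsMinimizer f κ ℓ Z Uset N M x u →
        Vmpc f κ ℓ Z Uset N M (f x (u 0)) + ENNReal.ofReal (εNM * ℓ x (u 0)) ≤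
          Vmpc f κ ℓ Z Uset N M x := by
  obtain ⟨⟨hρ0, hρ1⟩, -, hε, -⟩ := id hA2
  subst hργ hεNM
  have hB : 0 ≤ C ^ 2 * ρ ^ M / (1 - ρ ^ M) :=
    div_nonneg (by positivity) (sub_nonneg.2 (pow_le_one₀ hρ0 hρ1.le))
  have hγlow0 : 0 ≤ γlow := hγlow ▸ le_min (by linarith) (div_nonneg hVbar.le hε.le)
  obtain ⟨hN₀N, hγlowθ, hBθ⟩ := horizon_bounds hγ1 hγlow0 hB (hNM ▸ hN)
  have hθ : 0 ≤ ((γ - 1) / γ) ^ (N - N₀) :=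
    pow_nonneg (div_nonneg (by linarith) (by linarith)) _
  have hBθ' : C ^ 2 * ((γ - 1) / γ) ^ (N - N₀) * ρ ^ M / (1 - ρ ^ M) =
      C ^ 2 * ρ ^ M / (1 - ρ ^ M) * ((γ - 1) / γ) ^ (N - N₀) := by ring
  refine ⟨⟨by linarith, by nlinarith⟩, fun x hVx u hu => ?_⟩
  have hN₀bound : Vbar ≤ γ * ε + N₀ * ε := by
    have h := (le_max_right _ _).trans (Nat.le_ceil (max 0 ((Vbar - γ * ε) / ε)))
    rw [← hN₀, div_le_iff₀ hε] at h
    linarith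
  have hθε : ((γ - 1) / γ) ^ (N - N₀) * min (γ * ε) Vbar ≤ ε := by
    rw [← div_mul_cancel₀ Vbar hε.ne', ← min_mul_of_nonneg _ _ hε.le, ← hγlow]
    nlinarith
  exact hu.Vmpc_next_add_le hA2 hκU hℓ0 hγ hγ1 hVbar.le hM hN₀N hN₀bound hθε
    (hBθ'.trans_le hBθ.le) hVx

/-- Theorem 1, value-function decrease: under Assumptions 1 and 2 with
`ρ > 0` and `γ = C/(1-ρ) > 1`, for every `N > N_M` and every `x` with `V_{N,M}(x) ≤ V̄`,
any minimizing input sequence `u*` satisfies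
`V_{N,M}(f(x,u*(0))) ≤ V_{N,M}(x) - ε_{N,M} ℓ(x,u*(0))` with
`ε_{N,M} = 1 - C² ρ_γ^(N-N₀) ρ^M/(1-ρ^M) ∈ (0,1]`. -/
theorem value_function_decrease {n m : ℕ}
    (f : Vec n → Vec m → Vec n) (κ : Vec n → Vec m) (ℓ : Vec n → Vec m → ℝ)
    (Z : Set (Vec n × Vec m)) (Uset : Set (Vec m)) (ρ C ε : ℝ)
    (hf : Continuous fun p : Vec n × Vec m => f p.1 p.2) (hf0 : f 0 0 = 0)
    (hℓ : Continuous fun p : Vec n × Vec m => ℓ p.1 p.2) (hℓ0 : ∀ x u, 0 ≤ ℓ x u)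
    (hZ0 : ((0 : Vec n), (0 : Vec m)) ∈ interior Z) (hU : IsCompact Uset)
    (hκ : Continuous κ) (hκU : ∀ x, κ x ∈ Uset)
    (αlow αup : ℝ → ℝ) (hαlow : IsKInfty αlow) (hαup : IsKInfty αup)
    (hA1 : ∀ x : Vec n, αlow ‖x‖ ≤ lmin ℓ Uset x ∧ lmin ℓ Uset x ≤ αup ‖x‖)
    (hℓ00 : ℓ 0 0 = 0)
    (hA2 : Assumption2 f κ ℓ Z Uset ρ C ε) (hρpos : 0 < ρ)
    (Vbar γ ργ γlow NM : ℝ) (hVbar : 0 < Vbar) (hγ : γ = C / (1 - ρ)) (hγ1 : 1 < γ)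
    (hργ : ργ = (γ - 1) / γ) (hγlow : γlow = min γ (Vbar / ε))
    (N₀ : ℕ) (hN₀ : N₀ = ⌈max 0 ((Vbar - γ * ε) / ε)⌉₊)
    (M : ℕ) (hM : 1 ≤ M)
    (hNM : NM = N₀ + max (Real.log γlow)
        (max (Real.log (C ^ 2 * ρ ^ M / (1 - ρ ^ M))) 0) /
        (Real.log γ - Real.log (γ - 1)))
    (N : ℕ) (hN : NM < N) (εNM : ℝ)
    (hεNM : εNM = 1 - C ^ 2 * ργ ^ (N - N₀) * ρ ^ M / (1 - ρ ^ M)) :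
    εNM ∈ Set.Ioc (0 : ℝ) 1 ∧
    ∀ x : Vec n, Vmpc f κ ℓ Z Uset N M x ≤ ENNReal.ofReal Vbar →
      ∀ u : ℕ → Vec m, IsMinimizer f κ ℓ Z Uset N M x u →
        Vmpc f κ ℓ Z Uset N M (f x (u 0)) + ENNReal.ofReal (εNM * ℓ x (u 0)) ≤
          Vmpc f κ ℓ Z Uset N M x :=
  value_function_decrease_general f κ ℓ Z Uset ρ C ε hℓ0 hκU hA2 Vbar γ ργ γlow NM hVbar hγ hγ1 hργ
    hγlow N₀ hN₀ M hM hNM N hN εNM hεNM
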